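/- For any real α ≥ 5 and any real y > 1, the quantity g(y) := ((y^α - 1)/(y - 1))^2 - α((α-1)y^α + 1) is strictly positive. -/

import Mathlib

/-!
Multiplying by `(y - 1)²` turns the quantity into `num α y`, a combination of real powers of
`y` that vanishes at `y = 1` together with its first two derivatives. The third derivative is
`α (α - 1) y ^ (α - 3)` times
`4 (2α - 1) y ^ α - α (α + 1) (α + 2) y² + 2α (α - 1) (α + 1) y - (α - 2) (α² - α + 2)`,
and the second-order Bernoulli inequality `(1 + s) ^ α ≥ 1 + α s + α (α - 1) s² / 2` bounds
this cofactor below by `2α (α - 5) s + 3α² (α - 3) s²` at `y = 1 + s`; this is where `α ≥ 5`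
enters. Three applications of the mean value theorem, starting from `y = 1`, give
`num α y > 0` for `y > 1`.
-/

open Real Set

lemma hasDerivAt_const_mul_rpow (c p : ℝ) {x : ℝ} (hx : 0 < x) :
    HasDerivAt (fun y => c * y ^ p) (c * p * x ^ (p - 1)) x := by
  simpa [mul_assoc] using (hasDerivAt_rpow_const (Or.inl hx.ne')).const_mul c

lemma pos_of_hasDerivAt_pos {f f' : ℝ → ℝ} {a y : ℝ}
    (hf : ∀ x, a ≤ x → HasDerivAt f (f' x) x) (ha : 0 ≤ f a) (hf' : ∀ x, a < x → 0 < f' x)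
    (hy : a < y) : 0 < f y := by
  have hmono : StrictMonoOn f (Ici a) := by
    refine strictMonoOn_of_hasDerivWithinAt_pos (f' := f') (convex_Ici a)
      (fun x hx => (hf x hx).continuousAt.continuousWithinAt) (fun x hx => ?_)
      (fun x hx => ?_)
    all_goals rw [interior_Ici] at hx
    · exact (hf x hx.le).hasDerivWithinAt
    · exact hf' x hx
  exact ha.trans_lt (hmono self_mem_Ici hy.le hy)

lemma one_add_mul_add_sq_le_rpow {p s : ℝ} (hp : 2 ≤ p) (hs : 0 ≤ s) :
    1 + p * s + p * (p - 1) / 2 * s ^ 2 ≤ (1 + s) ^ p := by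
  set f : ℝ → ℝ := fun t => (1 + t) ^ p - (1 + p * t + p * (p - 1) / 2 * t ^ 2)
  set f' : ℝ → ℝ := fun t => p * ((1 + t) ^ (p - 1) - (1 + (p - 1) * t))
  have hderiv (t : ℝ) (ht : 0 ≤ t) : HasDerivAt f (f' t) t := by
    have hpow : HasDerivAt (fun t => (1 + t) ^ p) (p * (1 + t) ^ (p - 1)) t := by
      simpa using ((hasDerivAt_id' t).const_add 1).rpow_const (p := p) (Or.inl (by linarith))
    have hquad : HasDerivAt (fun t => 1 + p * t + p * (p - 1) / 2 * t ^ 2)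
        (p + p * (p - 1) * t) t :=
      ((((hasDerivAt_id' t).const_mul p).const_add 1).add
        ((hasDerivAt_pow 2 t).const_mul (p * (p - 1) / 2))).congr_deriv (by norm_num; ring)
    exact (hpow.sub hquad).congr_deriv (by ring)
  have hmono : MonotoneOn f (Ici 0) := by
    refine monotoneOn_of_hasDerivWithinAt_nonneg (f' := f') (convex_Ici 0)
      (fun t ht => (hderiv t ht).continuousAt.continuousWithinAt) (fun t ht => ?_)
      (fun t ht => ?_)
    all_goals rw [interior_Ici] at ht
    · exact (hderiv t ht.le).hasDerivWithinAt
    · exact mul_nonneg (by linarith)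
        (sub_nonneg.2 (one_add_mul_self_le_rpow_one_add (by linarith [mem_Ioi.1 ht])
          (by linarith)))
  simpa [f] using hmono self_mem_Ici hs hs

namespace ShockRarefaction

variable {a x : ℝ}

noncomputable def num (a y : ℝ) : ℝ :=
  y ^ (2 * a) - a * (a - 1) * y ^ (a + 2) + 2 * a * (a - 1) * y ^ (a + 1)
    - (a ^ 2 - a + 2) * y ^ a - a * y ^ 2 + 2 * a * y + (1 - a)

noncomputable def num' (a y : ℝ) : ℝ :=
  2 * a * y ^ (2 * a - 1) - a * (a - 1) * (a + 2) * y ^ (a + 1)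
    + 2 * a * (a - 1) * (a + 1) * y ^ a - a * (a ^ 2 - a + 2) * y ^ (a - 1) - 2 * a * y + 2 * a

noncomputable def num'' (a y : ℝ) : ℝ :=
  2 * a * (2 * a - 1) * y ^ (2 * a - 2) - a * (a - 1) * (a + 1) * (a + 2) * y ^ a
    + 2 * a ^ 2 * (a - 1) * (a + 1) * y ^ (a - 1) - a * (a - 1) * (a ^ 2 - a + 2) * y ^ (a - 2)
    - 2 * a

noncomputable def num''' (a y : ℝ) : ℝ :=
  2 * a * (2 * a - 1) * (2 * a - 2) * y ^ (2 * a - 3)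
    - a ^ 2 * (a - 1) * (a + 1) * (a + 2) * y ^ (a - 1)
    + 2 * a ^ 2 * (a - 1) ^ 2 * (a + 1) * y ^ (a - 2)
    - a * (a - 1) * (a - 2) * (a ^ 2 - a + 2) * y ^ (a - 3)

lemma hasDerivAt_num (hx : 0 < x) : HasDerivAt (num a) (num' a x) x := by
  have H := ((((((hasDerivAt_rpow_const (p := 2 * a) (Or.inl hx.ne')).sub
    (hasDerivAt_const_mul_rpow (a * (a - 1)) (a + 2) hx)).add
    (hasDerivAt_const_mul_rpow (2 * a * (a - 1)) (a + 1) hx)).sub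
    (hasDerivAt_const_mul_rpow (a ^ 2 - a + 2) a hx)).sub
    ((hasDerivAt_pow 2 x).const_mul a)).add ((hasDerivAt_id' x).const_mul (2 * a))).add_const
    (1 - a)
  exact H.congr_deriv (by rw [num']; norm_num; ring_nf)

lemma hasDerivAt_num' (hx : 0 < x) : HasDerivAt (num' a) (num'' a x) x := by
  have H := (((((hasDerivAt_const_mul_rpow (2 * a) (2 * a - 1) hx).sub
    (hasDerivAt_const_mul_rpow (a * (a - 1) * (a + 2)) (a + 1) hx)).add
    (hasDerivAt_const_mul_rpow (2 * a * (a - 1) * (a + 1)) a hx)).sub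
    (hasDerivAt_const_mul_rpow (a * (a ^ 2 - a + 2)) (a - 1) hx)).sub
    ((hasDerivAt_id' x).const_mul (2 * a))).add_const (2 * a)
  exact H.congr_deriv (by rw [num'']; ring_nf)

lemma hasDerivAt_num'' (hx : 0 < x) : HasDerivAt (num'' a) (num''' a x) x := by
  have H := ((((hasDerivAt_const_mul_rpow (2 * a * (2 * a - 1)) (2 * a - 2) hx).sub
    (hasDerivAt_const_mul_rpow (a * (a - 1) * (a + 1) * (a + 2)) a hx)).add
    (hasDerivAt_const_mul_rpow (2 * a ^ 2 * (a - 1) * (a + 1)) (a - 1) hx)).sub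
    (hasDerivAt_const_mul_rpow (a * (a - 1) * (a ^ 2 - a + 2)) (a - 2) hx)).sub_const (2 * a)
  exact H.congr_deriv (by rw [num''']; ring_nf)

lemma num'''_eq (hx : 0 < x) :
    num''' a x = a * (a - 1) * x ^ (a - 3) * (4 * (2 * a - 1) * x ^ a
      - a * (a + 1) * (a + 2) * x ^ 2 + 2 * a * (a - 1) * (a + 1) * x
      - (a - 2) * (a ^ 2 - a + 2)) := by
  rw [num''', show 2 * a - 3 = a - 3 + a by ring, show a - 1 = a - 3 + 2 by ring,
    show a - 2 = a - 3 + 1 by ring, rpow_add hx, rpow_add hx, rpow_add hx, rpow_one, rpow_two]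
  ring

lemma num'''_cofactor_pos (ha : 5 ≤ a) (hx : 1 < x) :
    0 < 4 * (2 * a - 1) * x ^ a - a * (a + 1) * (a + 2) * x ^ 2
      + 2 * a * (a - 1) * (a + 1) * x - (a - 2) * (a ^ 2 - a + 2) := by
  obtain ⟨s, hs, rfl⟩ : ∃ s, 0 < s ∧ x = 1 + s := ⟨x - 1, by linarith, by ring⟩
  calc 0 < 2 * a * (a - 5) * s + 3 * a ^ 2 * (a - 3) * s ^ 2 :=
        add_pos_of_nonneg_of_pos (mul_nonneg (mul_nonneg (by linarith) (by linarith)) hs.le)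
          (mul_pos (mul_pos (by positivity) (by linarith)) (by positivity))
    _ = 4 * (2 * a - 1) * (1 + a * s + a * (a - 1) / 2 * s ^ 2)
        - a * (a + 1) * (a + 2) * (1 + s) ^ 2 + 2 * a * (a - 1) * (a + 1) * (1 + s)
        - (a - 2) * (a ^ 2 - a + 2) := by ring
    _ ≤ _ := by
      gcongr
      · linarith
      · exact one_add_mul_add_sq_le_rpow (by linarith) hs.le

lemma num'''_pos (ha : 5 ≤ a) (hx : 1 < x) : 0 < num''' a x := by
  have hx0 : 0 < x := by linarith
  rw [num'''_eq hx0]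
  have : 0 < a * (a - 1) := by nlinarith
  have := num'''_cofactor_pos ha hx
  positivity

lemma num''_pos (ha : 5 ≤ a) (hx : 1 < x) : 0 < num'' a x :=
  pos_of_hasDerivAt_pos (fun _ hy => hasDerivAt_num'' (zero_lt_one.trans_le hy))
    (le_of_eq (by simp only [num'', one_rpow, mul_one]; ring)) (fun _ => num'''_pos ha) hx

lemma num'_pos (ha : 5 ≤ a) (hx : 1 < x) : 0 < num' a x :=
  pos_of_hasDerivAt_pos (fun _ hy => hasDerivAt_num' (zero_lt_one.trans_le hy))
    (le_of_eq (by simp only [num', one_rpow, mul_one]; ring)) (fun _ => num''_pos ha) hx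

lemma num_pos (ha : 5 ≤ a) (hx : 1 < x) : 0 < num a x :=
  pos_of_hasDerivAt_pos (fun _ hy => hasDerivAt_num (zero_lt_one.trans_le hy))
    (le_of_eq (by simp only [num, one_rpow, one_pow, mul_one]; ring)) (fun _ => num'_pos ha) hx

lemma sq_div_sub_eq_num_div_sq (hx : 0 < x) (hx1 : x ≠ 1) :
    ((x ^ a - 1) / (x - 1)) ^ 2 - a * ((a - 1) * x ^ a + 1) = num a x / (x - 1) ^ 2 := by
  have hsub : x - 1 ≠ 0 := sub_ne_zero.2 hx1
  rw [num, show 2 * a = a + a by ring, rpow_add hx, rpow_add hx, rpow_add_one hx.ne', rpow_two]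
  field_simp
  ring

end ShockRarefaction

open ShockRarefaction in
theorem stmt_1 (α y : ℝ) (hα : 5 ≤ α) (hy : 1 < y) :
    0 < ((y ^ α - 1) / (y - 1)) ^ 2 - α * ((α - 1) * y ^ α + 1) := by
  rw [sq_div_sub_eq_num_div_sq (by linarith) hy.ne']
  exact div_pos (num_pos hα hy) (pow_pos (sub_pos.2 hy) 2)
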